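/- The number of labelings B ∈ S(n,w) with exactly W discordant pairs with respect to a fixed injective score function equals Q(W,n,w) − Q(W−1,n,w), where Q satisfies the recursion Q(W,n,w) = Q(W,n−1,w) + Q(W−n+w,n−1,w−1), with Q(W,n,w) = 0 for W < 0, Q(W,n,w) = C(n,w) for W ≥ w(n−w), and Q(W,n,w) = W+1 when w = 1 or n−w = 1 (and 0 ≤ W ≤ w(n−w)); equivalently, Q(W,n,w) counts labelings with at most W discordant pairs. -/

import Mathlib

def weight {n : ℕ} (B : Fin n → Bool) : ℕ :=
  (Finset.univ.filter (fun i => B i = true)).card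

def hamming {n : ℕ} (B B' : Fin n → Bool) : ℕ :=
  (Finset.univ.filter (fun i => B i ≠ B' i)).card

theorem hamming_comm {n : ℕ} (B B' : Fin n → Bool) : hamming B B' = hamming B' B := by
  unfold hamming; congr 1; ext i; simp [ne_comm]

def johnson (n w : ℕ) : SimpleGraph {B : Fin n → Bool // weight B = w} where
  Adj B B' := hamming B.1 B'.1 = 2
  symm := ⟨fun B B' h => by simpa [hamming_comm] using h⟩
  loopless := ⟨fun B h => by simp [hamming] at h⟩

structure GraphOrientation {V : Type*} (G : SimpleGraph V) where
  dir : V → V → Prop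
  dir_adj : ∀ u v, dir u v → G.Adj u v
  total : ∀ u v, G.Adj u v → dir u v ∨ dir v u
  asymm : ∀ u v, dir u v → ¬ dir v u

noncomputable def outdeg {V : Type*} {G : SimpleGraph V} (Λ : GraphOrientation G) (v : V) : ℕ :=
  {u | Λ.dir v u}.ncard

noncomputable def Lmax (W n w : ℕ) : ℕ :=
  sSup {k | ∃ Λ : GraphOrientation (johnson n w), k = {B | outdeg Λ B ≤ W}.ncard}

noncomputable def discord {n : ℕ} (f : Fin n → ℝ) (B : Fin n → Bool) : ℕ :=
  (Finset.univ.filter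
    (fun p : Fin n × Fin n => B p.1 = true ∧ B p.2 = false ∧ f p.1 < f p.2)).card

def Q : ℕ → ℤ → ℕ → ℕ
  | n, W, w =>
    if W < 0 then 0
    else if ((w * (n - w) : ℕ) : ℤ) ≤ W then n.choose w
    else if w = 1 ∨ n - w = 1 then (W + 1).toNat
    else match n, w with
      | 0, _ => 0
      | _ + 1, 0 => 0
      | n + 1, w + 1 => Q n W (w + 1) + Q n (W - (n + 1) + (w + 1)) w

/-!
Sorting the items by their score reduces everything to a strictly increasing score, where the
discordant pairs of a 0/1 labelling are its inversions. Splitting off the lowest-scored item: if it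
is labelled 0 it is discordant with nothing, if it is labelled 1 it is discordant with each of the
`n - w` zeros among the remaining `n` items. So the cumulative counts `C(n, W, w)` satisfy
`C(n+1, W, w+1) = C(n, W, w+1) + C(n, W - n + w, w)`, which `Q` satisfies as well, and the two
agree by induction on `n`. The exact count is the difference of two consecutive cumulative counts.
-/

open Finset

section Q

variable {n w : ℕ} {W : ℤ}

theorem Q_of_neg (h : W < 0) : Q n W w = 0 := by
  rw [Q.eq_def]; dsimp only; simp [h]

theorem Q_of_mul_le (h0 : 0 ≤ W) (h : ((w * (n - w) : ℕ) : ℤ) ≤ W) :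
    Q n W w = n.choose w := by
  rw [Q.eq_def]; dsimp only; rw [if_neg (not_lt.2 h0), if_pos h]

theorem Q_of_lt (h : n < w) : Q n W w = 0 := by
  rcases lt_or_ge W 0 with hW | hW
  · exact Q_of_neg hW
  · rw [Q_of_mul_le hW (by simp [Nat.sub_eq_zero_of_le h.le, hW]), Nat.choose_eq_zero_of_lt h]

theorem Q_zero_right : Q n W 0 = if 0 ≤ W then 1 else 0 := by
  split_ifs with hW
  · rw [Q_of_mul_le hW (by simpa using hW), Nat.choose_zero_right]
  · exact Q_of_neg (not_le.1 hW)

theorem Q_of_lt_mul (h0 : 0 ≤ W) (h : W < ((w * (n - w) : ℕ) : ℤ))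
    (hw : w = 1 ∨ n - w = 1) :
    Q n W w = (W + 1).toNat := by
  rw [Q.eq_def]; dsimp only; rw [if_neg (not_lt.2 h0), if_neg (not_le.2 h), if_pos hw]

theorem Q_one_right (h0 : 0 ≤ W) (h : W < n) : Q n W 1 = (W + 1).toNat := by
  rcases lt_or_ge W (n - 1 : ℕ) with h' | h'
  · exact Q_of_lt_mul h0 (by simpa using h') (Or.inl rfl)
  · rw [Q_of_mul_le h0 (by simpa using h'), Nat.choose_one_right]; omega

theorem Q_pred_right (h0 : 0 ≤ W) (h : W ≤ w) : Q (w + 1) W w = (W + 1).toNat := by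
  rcases lt_or_ge W w with h' | h'
  · exact Q_of_lt_mul h0 (by simpa using h') (Or.inr (by omega))
  · rw [Q_of_mul_le h0 (by simpa using h'), Nat.choose_succ_self_right]; omega

end Q

/-- The boundary clauses in the definition of `Q` agree with the recursion, so it holds without
side conditions. -/
theorem Q_succ_succ (n w : ℕ) (W : ℤ) :
    Q (n + 1) W (w + 1) = Q n W (w + 1) + Q n (W - n + w) w := by
  rcases lt_or_ge n w with hnw | hwn
  · rw [Q_of_lt (by omega), Q_of_lt (by omega), Q_of_lt hnw]
  obtain ⟨m, rfl⟩ := Nat.exists_eq_add_of_le hwn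
  have hm : w + m + 1 - (w + 1) = m := by omega
  rw [Q.eq_def]; dsimp only
  split_ifs with hneg hbig hspecial
  · rw [Q_of_neg hneg, Q_of_neg (by omega)]
  · rw [hm] at hbig
    have hle : (w + 1) * (w + m - (w + 1)) ≤ (w + 1) * m := Nat.mul_le_mul_left _ (by omega)
    have hW : (w * m : ℤ) ≤ W - m := by push_cast at hbig; linarith
    rw [Q_of_mul_le (by omega) (by push_cast at hbig hle ⊢; linarith),
      Q_of_mul_le (by push_cast; nlinarith) (by rw [Nat.add_sub_cancel_left]; push_cast; linarith),
      Nat.choose_succ_succ', add_comm]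
  · rw [hm] at hbig hspecial
    rcases hspecial with hw | rfl
    · obtain rfl : w = 0 := by omega
      simp only [zero_add, Nat.cast_zero, add_zero, one_mul] at hbig ⊢
      rw [Q_one_right (by omega) (by omega), Q_of_neg (by omega), add_zero]
    · rw [Q_of_mul_le (by omega) (by simpa using not_lt.1 hneg), Nat.choose_self]
      rcases eq_or_lt_of_le (not_lt.1 hneg) with rfl | hW
      · rw [Q_of_neg (by omega)]; rfl
      · rw [show W - ((w + 1 : ℕ) : ℤ) + w = W - 1 by push_cast; ring,
          Q_pred_right (by omega) (by push_cast at hbig; omega)]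
        omega
  · congr 2; ring

section Counting

variable {n : ℕ}

theorem weight_le (B : Fin n → Bool) : weight B ≤ n :=
  (card_le_univ _).trans_eq (Fintype.card_fin n)

theorem card_filter_eq_false (B : Fin n → Bool) : #{i | B i = false} = n - weight B := by
  have := card_filter_add_card_filter_not (s := univ) (fun i => B i = true)
  simp only [card_univ, Fintype.card_fin, Bool.not_eq_true] at this
  rw [weight]; omega

theorem weight_cons (b : Bool) (B : Fin n → Bool) :
    weight (Fin.cons b B : Fin (n + 1) → Bool) = b.toNat + weight B := by
  simp only [weight, card_filter, Fin.sum_univ_succ, Fin.cons_zero, Fin.cons_succ]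
  cases b <;> rfl

theorem discord_cons {f : Fin (n + 1) → ℝ} (hf : ∀ i : Fin n, f 0 < f i.succ) (b : Bool)
    (B : Fin n → Bool) :
    discord f (Fin.cons b B) = b.toNat * (n - weight B) + discord (f ∘ Fin.succ) B := by
  rw [← card_filter_eq_false]
  simp only [discord, card_filter, Fintype.sum_prod_type, Fin.sum_univ_succ, Fin.cons_zero,
    Fin.cons_succ, Function.comp_apply, lt_irrefl, (hf _).not_gt, hf]
  cases b <;> simp

theorem card_filter_fin_succ {α : Type*} [Fintype α] (P : (Fin (n + 1) → α) → Prop)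
    [DecidablePred P] :
    #{B | P B} = ∑ a, #{B : Fin n → α | P (Fin.cons a B)} := by
  simp only [card_filter]
  rw [← Fintype.sum_prod_type', ← (Fin.consEquiv fun _ => α).sum_comp]
  rfl

theorem weight_comp_perm (B : Fin n → Bool) (σ : Equiv.Perm (Fin n)) :
    weight (B ∘ σ) = weight B :=
  card_equiv σ (by simp)

theorem discord_comp_perm (f : Fin n → ℝ) (B : Fin n → Bool) (σ : Equiv.Perm (Fin n)) :
    discord (f ∘ σ) (B ∘ σ) = discord f B :=
  card_equiv (σ.prodCongr σ) (by simp)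

theorem card_weight_discord_le_of_strictMono {f : Fin n → ℝ} (hf : StrictMono f) (w : ℕ)
    (W : ℤ) :
    #{B | weight B = w ∧ (discord f B : ℤ) ≤ W} = Q n W w := by
  induction n generalizing w W with
  | zero =>
    cases w with
    | zero => simp [Q_zero_right, weight, discord, apply_ite]
    | succ w => simp [Q_of_lt, weight]
  | succ n ih =>
    have hf0 : ∀ i : Fin n, f 0 < f i.succ := fun i => hf (Fin.succ_pos i)
    have ih' := ih (hf.comp (Fin.strictMono_succ))
    simp only [card_filter_fin_succ, Fintype.sum_bool, weight_cons, discord_cons hf0,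
      Bool.toNat_true, Bool.toNat_false, zero_mul, zero_add, one_mul]
    cases w with
    | zero => simp [ih', Q_zero_right]
    | succ w =>
      rw [Q_succ_succ, ← ih', ← ih', add_comm]
      congr 2
      ext B
      have := weight_le B
      simp only [mem_filter, mem_univ, true_and]
      omega

theorem card_weight_discord_le {f : Fin n → ℝ} (hf : Function.Injective f) (w : ℕ) (W : ℤ) :
    #{B | weight B = w ∧ (discord f B : ℤ) ≤ W} = Q n W w := by
  set σ := Tuple.sort f
  have hσ : StrictMono (f ∘ σ) :=
    (Tuple.monotone_sort f).strictMono_of_injective (hf.comp σ.injective)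
  rw [← card_weight_discord_le_of_strictMono hσ w W]
  refine card_equiv (Equiv.arrowCongr σ.symm (Equiv.refl Bool)) fun B => ?_
  change _ ↔ B ∘ σ ∈ _
  simp only [mem_filter, mem_univ, true_and, weight_comp_perm, discord_comp_perm]

end Counting

theorem stmt19 (n w : ℕ) (f : Fin n → ℝ) (hf : Function.Injective f) (W : ℕ) :
    {B : Fin n → Bool | weight B = w ∧ discord f B ≤ W}.ncard = Q n (W : ℤ) w ∧
    {B : Fin n → Bool | weight B = w ∧ discord f B = W}.ncard =
      Q n (W : ℤ) w - Q n ((W : ℤ) - 1) w := by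
  have hcount (V : ℤ) :
      {B : Fin n → Bool | weight B = w ∧ (discord f B : ℤ) ≤ V}.ncard = Q n V w := by
    rw [Set.ncard_eq_toFinset_card', Set.toFinset_ofPred, card_weight_discord_le hf]
  have hsub : {B : Fin n → Bool | weight B = w ∧ (discord f B : ℤ) ≤ W - 1} ⊆
      {B | weight B = w ∧ (discord f B : ℤ) ≤ W} := fun B hB => ⟨hB.1, by linarith [hB.2]⟩
  have hdiff : {B : Fin n → Bool | weight B = w ∧ discord f B = W} =
      {B | weight B = w ∧ (discord f B : ℤ) ≤ W} \
        {B | weight B = w ∧ (discord f B : ℤ) ≤ W - 1} := by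
    ext B; simp only [Set.mem_ofPred_eq, Set.mem_sdiff]; omega
  refine ⟨by simpa using hcount W, ?_⟩
  rw [hdiff, Set.ncard_sdiff hsub, hcount, hcount]
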